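/- For all a, b ∈ A and x ∈ B one has E·(xa⊗b) = E·(a⊗S_B(x)b) in A⊗A, and for all a, b ∈ A the element E·(a⊗b) − a⊗b lies in the subspace J_ℓ := span_ℂ{xa'⊗b' − a'⊗S_B(x)b' : x ∈ B, a', b' ∈ A}. (Hence the map θ_ℓ(a⊗b) = E·(a⊗b) descends to a well-defined map on the balanced quotient A⊗_ℓA := (A⊗A)/J_ℓ which is a section of the quotient map.) -/

import Mathlib

open scoped TensorProduct

set_option synthInstance.maxHeartbeats 1000000
set_option maxHeartbeats 1000000

/-- The canonical inclusion `B ⊗ C → A ⊗ A` for subalgebras `B, C ⊆ A`. -/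
noncomputable def incl {A : Type*} [Ring A] [Algebra ℂ A] (B C : Subalgebra ℂ A) :
    (↥B ⊗[ℂ] ↥C) →ₗ[ℂ] (A ⊗[ℂ] A) :=
  TensorProduct.map B.val.toLinearMap C.val.toLinearMap

/-- The linear map `μ_{S_B} : B ⊗ C → C`, `b ⊗ c ↦ S_B(b)·c`. -/
noncomputable def muSB {A : Type*} [Ring A] [Algebra ℂ A] {B C : Subalgebra ℂ A}
    (SB : ↥B ≃ₗ[ℂ] ↥C) : (↥B ⊗[ℂ] ↥C) →ₗ[ℂ] ↥C :=
  TensorProduct.lift (LinearMap.mul ℂ ↥C) ∘ₗ TensorProduct.map SB.toLinearMap LinearMap.id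

/-- The linear map `μ_{S_C} : B ⊗ C → B`, `b ⊗ c ↦ b·S_C(c)`. -/
noncomputable def muSC {A : Type*} [Ring A] [Algebra ℂ A] {B C : Subalgebra ℂ A}
    (SC : ↥C ≃ₗ[ℂ] ↥B) : (↥B ⊗[ℂ] ↥C) →ₗ[ℂ] ↥B :=
  TensorProduct.lift (LinearMap.mul ℂ ↥B) ∘ₗ TensorProduct.map LinearMap.id SC.toLinearMap

/-! The relation `E·(x⊗1) = E·(1⊗S_B x)` lets `E` move any `x ∈ B` from the left tensor factor
to the right one as `S_B x`, which is the first claim. For the second, write `E = ∑ xᵢ ⊗ yᵢ`: each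
`xᵢa ⊗ yᵢb` is congruent modulo `J_ℓ` to `a ⊗ S_B(xᵢ)yᵢb`, so
`E·(a⊗b) ≡ a ⊗ μ_{S_B}(E)·b = a ⊗ b`. -/

theorem TensorProduct.mul_tmul_mul_eq_of_mul_tmul_one_eq {R A A' : Type*} [CommSemiring R]
    [Semiring A] [Algebra R A] [Semiring A'] [Algebra R A'] {e : A ⊗[R] A'} {x : A} {y : A'}
    (h : e * (x ⊗ₜ[R] (1 : A')) = e * ((1 : A) ⊗ₜ[R] y)) (a : A) (b : A') :
    e * ((x * a) ⊗ₜ[R] b) = e * (a ⊗ₜ[R] (y * b)) := by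
  calc e * ((x * a) ⊗ₜ[R] b) = e * (x ⊗ₜ[R] (1 : A')) * (a ⊗ₜ[R] b) := by
        rw [mul_assoc, Algebra.TensorProduct.tmul_mul_tmul, one_mul]
    _ = e * ((1 : A) ⊗ₜ[R] y) * (a ⊗ₜ[R] b) := by rw [h]
    _ = e * (a ⊗ₜ[R] (y * b)) := by
        rw [mul_assoc, Algebra.TensorProduct.tmul_mul_tmul, one_mul]

section Balanced

variable {A : Type*} [Ring A] [Algebra ℂ A] {B C : Subalgebra ℂ A}

/-- The subspace `J_ℓ` of `A ⊗ A` defining the balanced tensor product `A ⊗_ℓ A`. -/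
def balancedSpan (SB : ↥B ≃ₗ[ℂ] ↥C) : Submodule ℂ (A ⊗[ℂ] A) :=
  Submodule.span ℂ {z : A ⊗[ℂ] A |
    ∃ (x : ↥B) (a' b' : A), z = ((x : A) * a') ⊗ₜ[ℂ] b' - a' ⊗ₜ[ℂ] (((SB x : ↥C) : A) * b')}

theorem incl_tmul (x : ↥B) (y : ↥C) : incl B C (x ⊗ₜ[ℂ] y) = (x : A) ⊗ₜ[ℂ] (y : A) :=
  TensorProduct.map_tmul _ _ x y

theorem incl_mul (s t : ↥B ⊗[ℂ] ↥C) : incl B C (s * t) = incl B C s * incl B C t :=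
  map_mul (Algebra.TensorProduct.map B.val C.val) s t

theorem incl_mul_tmul_sub_tmul_muSB_mem_balancedSpan (SB : ↥B ≃ₗ[ℂ] ↥C) (t : ↥B ⊗[ℂ] ↥C)
    (a b : A) :
    incl B C t * (a ⊗ₜ[ℂ] b) - a ⊗ₜ[ℂ] (((muSB SB t : ↥C) : A) * b) ∈ balancedSpan SB := by
  induction t using TensorProduct.induction_on with
  | zero => simp
  | tmul x y =>
    have hmem : ((x : A) * a) ⊗ₜ[ℂ] ((y : A) * b) - a ⊗ₜ[ℂ] (((SB x : ↥C) : A) * ((y : A) * b))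
        ∈ balancedSpan SB := Submodule.subset_span ⟨x, a, (y : A) * b, rfl⟩
    simpa [incl_tmul, muSB, Algebra.TensorProduct.tmul_mul_tmul, mul_assoc] using hmem
  | add s t hs ht =>
    convert add_mem hs ht using 1
    simp only [map_add, add_mul, Subalgebra.coe_add, TensorProduct.tmul_add]
    abel

end Balanced

theorem stmt10_general {A : Type*} [Ring A] [Algebra ℂ A] (B C : Subalgebra ℂ A)
    (SB : ↥B ≃ₗ[ℂ] ↥C)
    (E : ↥B ⊗[ℂ] ↥C)
    (hE1 : ∀ x : ↥B, E * (x ⊗ₜ[ℂ] (1 : ↥C)) = E * ((1 : ↥B) ⊗ₜ[ℂ] SB x))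
    (hn1 : muSB SB E = 1) :
    (∀ (a b : A) (x : ↥B),
      incl B C E * (((x : A) * a) ⊗ₜ[ℂ] b) =
        incl B C E * (a ⊗ₜ[ℂ] (((SB x : ↥C) : A) * b))) ∧
    (∀ a b : A,
      incl B C E * (a ⊗ₜ[ℂ] b) - a ⊗ₜ[ℂ] b ∈
        Submodule.span ℂ {z : A ⊗[ℂ] A |
          ∃ (x : ↥B) (a' b' : A),
            z = ((x : A) * a') ⊗ₜ[ℂ] b' - a' ⊗ₜ[ℂ] (((SB x : ↥C) : A) * b')}) := by
  refine ⟨fun a b x => ?_, fun a b => ?_⟩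
  · have hx := congrArg (incl B C) (hE1 x)
    rw [incl_mul, incl_mul, incl_tmul, incl_tmul] at hx
    exact TensorProduct.mul_tmul_mul_eq_of_mul_tmul_one_eq hx a b
  · have hJ := incl_mul_tmul_sub_tmul_muSB_mem_balancedSpan SB E a b
    rwa [hn1, OneMemClass.coe_one, one_mul] at hJ

/-- For all `a, b ∈ A` and `x ∈ B` one has `E·(xa⊗b) = E·(a⊗S_B(x)b)` in `A⊗A`, and
`E·(a⊗b) − a⊗b` lies in the balancing subspace `J_ℓ`. -/
theorem stmt10 {A : Type*} [Ring A] [Algebra ℂ A] (B C : Subalgebra ℂ A)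
    (hcomm : ∀ (x : ↥B) (y : ↥C), (x : A) * (y : A) = (y : A) * (x : A))
    (SB : ↥B ≃ₗ[ℂ] ↥C) (hSBmul : ∀ x x' : ↥B, SB (x * x') = SB x' * SB x)
    (hSBone : SB 1 = 1)
    (SC : ↥C ≃ₗ[ℂ] ↥B) (hSCmul : ∀ y y' : ↥C, SC (y * y') = SC y' * SC y)
    (hSCone : SC 1 = 1)
    (E : ↥B ⊗[ℂ] ↥C) (hEidem : E * E = E)
    (hE1 : ∀ x : ↥B, E * (x ⊗ₜ[ℂ] (1 : ↥C)) = E * ((1 : ↥B) ⊗ₜ[ℂ] SB x))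
    (hE2 : ∀ y : ↥C, ((1 : ↥B) ⊗ₜ[ℂ] y) * E = (SC y ⊗ₜ[ℂ] (1 : ↥C)) * E)
    (hn1 : muSB SB E = 1) (hn2 : muSC SC E = 1) :
    (∀ (a b : A) (x : ↥B),
      incl B C E * (((x : A) * a) ⊗ₜ[ℂ] b) =
        incl B C E * (a ⊗ₜ[ℂ] (((SB x : ↥C) : A) * b))) ∧
    (∀ a b : A,
      incl B C E * (a ⊗ₜ[ℂ] b) - a ⊗ₜ[ℂ] b ∈
        Submodule.span ℂ {z : A ⊗[ℂ] A |
          ∃ (x : ↥B) (a' b' : A),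
            z = ((x : A) * a') ⊗ₜ[ℂ] b' - a' ⊗ₜ[ℂ] (((SB x : ↥C) : A) * b')}) :=
  stmt10_general B C SB E hE1 hn1
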